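/- Let X be a completely regular Hausdorff space and κ an infinite cardinal, and suppose N_Δ, the set of all neighborhoods of the diagonal in X × X ordered by reverse inclusion, has calibre (κ⁺, ω), where κ⁺ is the successor cardinal of κ. Then every compact subset A of X, with the subspace topology, has a topological base of cardinality at most κ. -/

import Mathlib

/-!
A compact subset `A` is a compact Hausdorff space, so its unique uniformity consists of the
traces on `A × A` of the neighbourhoods of the diagonal of `X`, and the calibre passes to the
entourages of `A`. If `A` had no base of size `≤ κ`, then no `κ` closed entourages could
intersect in the diagonal: by compactness their finite intersections would form a base of the
uniformity, and finite covers by the corresponding balls would give a small base. A transfinite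
recursion then produces closed entourages `V α` and points `p α` (`α < κ⁺`) with `p α ∈ V β`
for `β < α` but `p α ∉ V α ○ V α ○ V α`. The calibre yields an infinite `T` for which
`E = ⋂ α ∈ T, V α` is an entourage, and total boundedness yields `β < α` in `T` with `p β`,
`p α` coordinatewise `E`-close, whence `p β ∈ V β ○ V β ○ V β`.
-/

open Set Topology Cardinal
open Filter Uniformity TopologicalSpace
open scoped SetRel

universe u

/-- A directed set `P` has calibre `(μ, ω)` if every subset of cardinality `μ`
has an infinite subset with an upper bound. -/
def Calibre (P : Type u) [Preorder P] (μ : Cardinal.{u}) : Prop :=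
  ∀ S : Set P, #S = μ → ∃ T ⊆ S, T.Infinite ∧ BddAbove T

/-- The poset of all neighborhoods of the diagonal in `X × X`,
ordered by reverse inclusion. -/
abbrev DiagNbhdPoset (X : Type*) [TopologicalSpace X] :=
  ({U : Set (X × X) // U ∈ nhdsSet (Set.diagonal X)})ᵒᵈ

theorem Calibre.exists_infinite_bddAbove_image {P ι : Type u} [Preorder P] {μ : Cardinal.{u}}
    (hP : Calibre P μ) (hμ : ℵ₀ ≤ μ) (f : ι → P) (hι : #ι = μ) :
    ∃ T : Set ι, T.Infinite ∧ BddAbove (f '' T) := by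
  rcases (mk_range_le.trans_eq hι).lt_or_eq with hlt | heq
  · have : Infinite ι := infinite_iff.2 (hι ▸ hμ)
    obtain ⟨y, hy⟩ := exists_infinite_fiber (rangeFactorization f) (hι ▸ hlt)
    have hfiber : rangeFactorization f ⁻¹' {y} = f ⁻¹' {y.1} := by
      ext i
      simp [Subtype.ext_iff, rangeFactorization]
    refine ⟨f ⁻¹' {y.1}, hfiber ▸ infinite_coe_iff.1 hy, ?_⟩
    exact (bddAbove_singleton (a := y.1)).mono (image_preimage_subset _ _)
  · obtain ⟨T, hTf, hT, hTbdd⟩ := hP _ heq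
    rw [← image_preimage_eq_of_subset hTf] at hT hTbdd
    exact ⟨f ⁻¹' T, hT.of_image f, hTbdd⟩

theorem mk_finset_le_of_mk_le {ι : Type u} {κ : Cardinal.{u}} (hκ : ℵ₀ ≤ κ)
    (hι : #ι ≤ κ) : #(Finset ι) ≤ κ := by
  classical
  calc #(Finset ι) ≤ #(List ι) := mk_le_of_surjective List.toFinset_surjective
    _ ≤ max ℵ₀ #ι := mk_list_le_max ι
    _ ≤ κ := max_le hκ hι

theorem WellFoundedLT.exists_forall_image_Iio {ι α : Type u} [LinearOrder ι] [WellFoundedLT ι]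
    {κ : Cardinal.{u}} (hι : ∀ i : ι, #(Iio i) ≤ κ) {P : Set α → α → Prop}
    (h : ∀ S : Set α, #S ≤ κ → ∃ a, P S a) :
    ∃ f : ι → α, ∀ i, P (f '' Iio i) (f i) := by
  have : Nonempty α := ⟨(h ∅ (by simp)).choose⟩
  choose! g hg using h
  let f : ι → α := WellFoundedLT.fix fun i prior => g (range fun j : Iio i => prior j j.2)
  refine ⟨f, fun i => ?_⟩
  have hfi : f i = g (f '' Iio i) := by
    rw [image_eq_range]
    exact WellFoundedLT.fix_eq _ i
  exact hfi ▸ hg _ (mk_image_le.trans (hι i))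

theorem IsClosed.comap_prodMap_val_nhdsSet_diagonal {X : Type*} [TopologicalSpace X] {A : Set X}
    (hA : IsClosed A) :
    comap (Prod.map ((↑) : A → X) (↑)) (𝓝ˢ (diagonal X)) = 𝓝ˢ (diagonal A) := by
  rw [(hA.isClosedEmbedding_subtypeVal.prodMap hA.isClosedEmbedding_subtypeVal).isClosedMap
    |>.comap_nhdsSet_eq (by fun_prop), preimage_coe_coe_diagonal]

section UniformSpace

variable {Y : Type*} [UniformSpace Y]

theorem exists_isClosed_mem_uniformity_notMem_comp_comp [T0Space Y] {x y : Y} (h : x ≠ y) :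
    ∃ V ∈ 𝓤 Y, IsClosed V ∧ (x, y) ∉ V ○ V ○ V := by
  obtain ⟨W, hW, hxy⟩ : ∃ W ∈ 𝓤 Y, (x, y) ∉ W := by
    by_contra! hall
    exact h (eq_of_uniformity fun hV => hall _ hV)
  obtain ⟨U, hU, -, hUW⟩ := comp_comp_symm_mem_uniformity_sets hW
  obtain ⟨V, ⟨hV, hVc⟩, hVU⟩ := uniformity_hasBasis_closed.mem_iff.1 hU
  refine ⟨V, hV, hVc, fun hmem => hxy (hUW ?_)⟩
  exact SetRel.comp_subset_comp (SetRel.comp_subset_comp hVU hVU) hVU hmem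

theorem TotallyBounded.exists_lt_mem_uniformity_of_infinite {ι : Type*} [LinearOrder ι]
    (hY : TotallyBounded (univ : Set Y)) {T : Set ι} (hT : T.Infinite) (q : ι → Y)
    {U : Set (Y × Y)} (hU : U ∈ 𝓤 Y) :
    ∃ i ∈ T, ∃ j ∈ T, i < j ∧ (q i, q j) ∈ U ∧ (q j, q i) ∈ U := by
  obtain ⟨W, hW, hWsymm, hWU⟩ := comp_symm_mem_uniformity_sets hU
  obtain ⟨t, ht, hcov⟩ := hY W hW
  choose c hct hc using fun z => mem_iUnion₂.1 (hcov (mem_univ z))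
  obtain ⟨i, hi, j, hj, hij, hcij⟩ :=
    hT.exists_ne_map_eq_of_mapsTo (f := fun k => c (q k)) (fun k _ => hct (q k)) ht
  have hclose : ∀ k l, c (q k) = c (q l) → (q k, q l) ∈ U := fun k l hkl =>
    hWU (SetRel.prodMk_mem_comp (hc (q k)) (hkl ▸ hWsymm.symm _ _ (hc (q l))))
  rcases hij.lt_or_gt with hlt | hgt
  · exact ⟨i, hi, j, hj, hlt, hclose _ _ hcij, hclose _ _ hcij.symm⟩
  · exact ⟨j, hj, i, hi, hgt, hclose _ _ hcij.symm, hclose _ _ hcij⟩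

theorem hasBasis_uniformity_biInter_finset_of_iInter_subset_diagonal [CompactSpace Y]
    {ι : Type*} {F : ι → Set (Y × Y)} (hF : ∀ i, F i ∈ 𝓤 Y)
    (hFc : ∀ i, IsClosed (F i)) (hΔ : ⋂ i, F i ⊆ diagonal Y) :
    (𝓤 Y).HasBasis (fun _ : Finset ι => True) fun t => ⋂ i ∈ t, F i := by
  refine ⟨fun W => ⟨fun hW => ?_, fun ⟨t, _, ht⟩ =>
    mem_of_superset ((biInter_finset_mem t).2 fun i _ => hF i) ht⟩⟩
  have hΔW : diagonal Y ⊆ interior W :=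
    subset_interior_iff_mem_nhdsSet.2 (nhdsSet_diagonal_eq_uniformity (α := Y) ▸ hW)
  obtain ⟨t, ht⟩ := isOpen_interior.isClosed_compl.isCompact.elim_finite_subfamily_closed F hFc
    (by rw [inter_comm, ← sdiff_eq, sdiff_eq_empty]; exact hΔ.trans hΔW)
  rw [inter_comm, ← sdiff_eq, sdiff_eq_empty] at ht
  exact ⟨t, trivial, ht.trans interior_subset⟩

end UniformSpace

theorem exists_isTopologicalBasis_card_le_of_hasBasis {Y ι : Type u} [UniformSpace Y]
    (hY : TotallyBounded (univ : Set Y)) {κ : Cardinal.{u}} (hκ : ℵ₀ ≤ κ)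
    (hι : #ι ≤ κ) {p : ι → Prop} {s : ι → Set (Y × Y)} (h : (𝓤 Y).HasBasis p s) :
    ∃ B : Set (Set Y), #B ≤ κ ∧ IsTopologicalBasis B := by
  have hcover : ∀ i, ∃ t : Set Y, t.Finite ∧
      (p i → Set.univ ⊆ ⋃ y ∈ t, {x | (x, y) ∈ interior (s i)}) := by
    intro i
    by_cases hi : p i
    · obtain ⟨t, ht, hcov⟩ := hY _ (interior_mem_uniformity (h.mem_of_mem hi))
      exact ⟨t, ht, fun _ => hcov⟩
    · exact ⟨∅, finite_empty, fun hi' => absurd hi' hi⟩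
  choose t ht hcov using hcover
  refine ⟨⋃ i, (fun y => {x | (x, y) ∈ interior (s i)}) '' t i, ?_, ?_⟩
  · calc _ ≤ #ι * ⨆ i, #((fun y => {x | (x, y) ∈ interior (s i)}) '' t i) := mk_iUnion_le _
      _ ≤ κ * κ := mul_le_mul' hι (ciSup_le' fun i => ((ht i).image _).lt_aleph0.le.trans hκ)
      _ = κ := mul_eq_self hκ
  refine isTopologicalBasis_of_isOpen_of_nhds ?_ fun x O hx hO => ?_
  · rintro _ ⟨_, ⟨i, rfl⟩, y, -, rfl⟩
    exact isOpen_interior.preimage (continuous_id.prodMk continuous_const)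
  obtain ⟨V, hV, hVO⟩ := isOpen_iff_ball_subset.1 hO x hx
  obtain ⟨W, hW, hWsymm, hWV⟩ := comp_symm_mem_uniformity_sets hV
  obtain ⟨i, hi, hiW⟩ := h.mem_iff.1 hW
  obtain ⟨y, hy, hxy⟩ := mem_iUnion₂.1 (hcov i hi (mem_univ x))
  refine ⟨_, mem_iUnion.2 ⟨i, mem_image_of_mem _ hy⟩, hxy, fun z hz => hVO (hWV ?_)⟩
  exact SetRel.prodMk_mem_comp (hiW (interior_subset hxy))
    (hWsymm.symm _ _ (hiW (interior_subset hz)))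

theorem exists_isTopologicalBasis_card_le_of_iInter_subset_diagonal {Y ι : Type u}
    [UniformSpace Y] [CompactSpace Y] {κ : Cardinal.{u}} (hκ : ℵ₀ ≤ κ) (hι : #ι ≤ κ)
    {F : ι → Set (Y × Y)} (hF : ∀ i, F i ∈ 𝓤 Y) (hFc : ∀ i, IsClosed (F i))
    (hΔ : ⋂ i, F i ⊆ diagonal Y) :
    ∃ B : Set (Set Y), #B ≤ κ ∧ IsTopologicalBasis B :=
  exists_isTopologicalBasis_card_le_of_hasBasis isCompact_univ.totallyBounded hκ
    (mk_finset_le_of_mk_le hκ hι)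
    (hasBasis_uniformity_biInter_finset_of_iInter_subset_diagonal hF hFc hΔ)

theorem exists_isTopologicalBasis_card_le_of_forall_exists_infinite {Y ι : Type u}
    [UniformSpace Y] [CompactSpace Y] [T0Space Y] [LinearOrder ι] [WellFoundedLT ι]
    {κ : Cardinal.{u}} (hκ : ℵ₀ ≤ κ) (hι : ∀ i : ι, #(Iio i) ≤ κ)
    (hcal : ∀ V : ι → Set (Y × Y), (∀ i, V i ∈ 𝓤 Y) →
      ∃ T : Set ι, T.Infinite ∧ ⋂ i ∈ T, V i ∈ 𝓤 Y) :
    ∃ B : Set (Set Y), #B ≤ κ ∧ IsTopologicalBasis B := by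
  by_contra hB
  have hstep : ∀ S : Set ({V : Set (Y × Y) // V ∈ 𝓤 Y ∧ IsClosed V} × (Y × Y)),
      #S ≤ κ → ∃ a : {V : Set (Y × Y) // V ∈ 𝓤 Y ∧ IsClosed V} × (Y × Y),
        (∀ b ∈ S, a.2 ∈ b.1.1) ∧ a.2 ∉ a.1.1 ○ a.1.1 ○ a.1.1 := by
    intro S hS
    obtain ⟨⟨x, y⟩, hxyS, hxy⟩ :=
      not_subset.1 fun (hΔ : ⋂ b : S, b.1.1.1 ⊆ diagonal Y) =>
        hB <| exists_isTopologicalBasis_card_le_of_iInter_subset_diagonal hκ hS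
          (fun b => b.1.1.2.1) (fun b => b.1.1.2.2) hΔ
    obtain ⟨V, hV, hVc, hxyV⟩ := exists_isClosed_mem_uniformity_notMem_comp_comp hxy
    exact ⟨(⟨V, hV, hVc⟩, (x, y)), fun b hb => mem_iInter.1 hxyS ⟨b, hb⟩, hxyV⟩
  obtain ⟨f, hf⟩ := WellFoundedLT.exists_forall_image_Iio hι hstep
  let V : ι → Set (Y × Y) := fun i => (f i).1.1
  let p : ι → Y × Y := fun i => (f i).2
  have hpV : ∀ {j i}, j < i → p i ∈ V j := fun hji => (hf _).1 _ ⟨_, hji, rfl⟩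
  obtain ⟨T, hT, hTU⟩ := hcal V fun i => (f i).1.2.1
  obtain ⟨j, hj, i, hi, hji, hij, hji'⟩ := isCompact_univ.totallyBounded
    |>.exists_lt_mem_uniformity_of_infinite hT p (entourageProd_mem_uniformity hTU hTU)
  have hE : ⋂ k ∈ T, V k ⊆ V j := biInter_subset_of_mem hj
  exact (hf j).2 <|
    SetRel.prodMk_mem_comp (SetRel.prodMk_mem_comp (hE hij.1) (hpV hji)) (hE hji'.2)

theorem stmt16_general {X : Type u} [TopologicalSpace X] [T2Space X]
    (κ : Cardinal.{u}) (hκ : ℵ₀ ≤ κ)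
    (hcal : Calibre (DiagNbhdPoset X) (Order.succ κ))
    (A : Set X) (hA : IsCompact A) :
    ∃ B : Set (Set A), #B ≤ κ ∧ TopologicalSpace.IsTopologicalBasis B := by
  have : CompactSpace A := isCompact_iff_compactSpace.mp hA
  let : UniformSpace A := uniformSpaceOfCompactR1
  have hU : 𝓤 A = comap (Prod.map (↑) (↑)) (𝓝ˢ (diagonal X)) := by
    rw [hA.isClosed.comap_prodMap_val_nhdsSet_diagonal, nhdsSet_diagonal_eq_uniformity]
  refine exists_isTopologicalBasis_card_le_of_forall_exists_infinite
    (ι := (Order.succ κ).ord.ToType) hκ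
    (fun i => Order.lt_succ_iff.1 (by simpa using mk_Iio_lt i)) fun V hV => ?_
  choose E hE hEV using fun i => mem_comap.1 (hU ▸ hV i)
  obtain ⟨T, hT, u, hu⟩ := hcal.exists_infinite_bddAbove_image (hκ.trans (Order.le_succ κ))
    (fun i => OrderDual.toDual ⟨E i, hE i⟩) (mk_ord_toType _)
  refine ⟨T, hT, hU ▸ mem_comap.2 ⟨u.1, u.2, fun z hz => mem_iInter₂.2 fun i hi => ?_⟩⟩
  exact hEV i (hu ⟨i, hi, rfl⟩ hz)

/-- If the neighborhood filter of the diagonal of a completely regular Hausdorff space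
has calibre `(κ⁺, ω)`, then every compact subset has a topological base of
cardinality at most `κ`. -/
theorem stmt16 {X : Type u} [TopologicalSpace X] [CompletelyRegularSpace X] [T2Space X]
    (κ : Cardinal.{u}) (hκ : ℵ₀ ≤ κ)
    (hcal : Calibre (DiagNbhdPoset X) (Order.succ κ))
    (A : Set X) (hA : IsCompact A) :
    ∃ B : Set (Set A), #B ≤ κ ∧ TopologicalSpace.IsTopologicalBasis B :=
  stmt16_general κ hκ hcal A hA
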